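/- For every integer k ≥ 4, the sequence {S(R_{2,3,…,k−2,k}(n) + R_{2,3,…,k−1}(n) + R_{2,3,…,k}(n))} of exponential sums satisfies the homogeneous linear recurrence with characteristic polynomial X^k − 2(X^{k−2} + X^{k−3} + ⋯ + X^2 + 1). -/

import Mathlib

open Finset

/-- Exponential sum of a Boolean function in `n` variables. -/
noncomputable def boolExpSum (n : ℕ) (F : (Fin n → ZMod 2) → ZMod 2) : ℤ :=
  ∑ x : Fin n → ZMod 2, (-1 : ℤ) ^ (F x).val

/-- Extension of a vector `x ∈ F₂ⁿ` to a function on `ℕ` (index `i` corresponds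
to the variable `X_{i+1}`; out-of-range indices give `0`). -/
def extVar {n : ℕ} (x : Fin n → ZMod 2) : ℕ → ZMod 2 :=
  fun i => if h : i < n then x ⟨i, h⟩ else 0

/-- The monomial rotation symmetric Boolean function in `n` variables whose base
monomial has (0-indexed) offset set `s`: `∑_{i=1}^n ∏_{l∈s} X_{i+l}`, cyclic mod `n`. -/
def rotOffsets (s : Finset ℕ) (n : ℕ) (x : Fin n → ZMod 2) : ZMod 2 :=
  ∑ i ∈ Finset.range n, ∏ l ∈ s, extVar x ((i + l) % n)

/-- The sum `R_{2,3,…,k−2,k}(n) + R_{2,3,…,k−1}(n) + R_{2,3,…,k}(n)` as a Boolean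
function in `n` variables; the rotations have offset sets `{0,…,k−3,k−1}`,
`{0,…,k−2}` and `{0,…,k−1}` respectively. -/
def Gfun (k n : ℕ) (x : Fin n → ZMod 2) : ZMod 2 :=
  rotOffsets (insert (k - 1) (Finset.range (k - 2))) n x
    + rotOffsets (Finset.range (k - 1)) n x + rotOffsets (Finset.range k) n x

/- ### basic character -/

def chi (v : ZMod 2) : ℤ := if v = 0 then 1 else -1

lemma chi_add (u v : ZMod 2) : chi (u + v) = chi u * chi v := by revert u v; decide

lemma chi_zero : chi 0 = 1 := rfl

lemma neg_one_pow_val (v : ZMod 2) : (-1 : ℤ) ^ v.val = chi v := by revert v; decide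

lemma chi_sum {ι : Type*} (s : Finset ι) (f : ι → ZMod 2) :
    chi (∑ i ∈ s, f i) = ∏ i ∈ s, chi (f i) := by
  classical
  induction s using Finset.cons_induction with
  | empty => simp [chi]
  | cons a s ha ih => rw [Finset.sum_cons, Finset.prod_cons, chi_add, ih]

def or2 (u v : ZMod 2) : ZMod 2 := u + v + u * v

lemma or2_one (v : ZMod 2) : or2 1 v = 1 := by revert v; decide

lemma or2_zero (v : ZMod 2) : or2 0 v = v := by revert v; decide

lemma zmod2_cases (v : ZMod 2) : v = 0 ∨ v = 1 := by revert v; decide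

/- ### states and transfer operator -/

abbrev St (K : ℕ) := Fin (K + 3) → ZMod 2

def ofFun (K : ℕ) (f : ℕ → ZMod 2) : St K := fun j => f j.val

def pull (K : ℕ) (d : ZMod 2) (b : St K) : St K :=
  ofFun K (fun j => if j = 0 then d else extVar b (j - 1))

def bw (K : ℕ) (d : ZMod 2) (b : St K) : ℕ → ZMod 2 :=
  fun l => if l = 0 then d else extVar b (l - 1)

def wordWt (K : ℕ) (c : ℕ → ZMod 2) : ℤ :=
  chi ((∏ l ∈ range (K + 2), c l) * or2 (c (K + 2)) (c (K + 3)))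

def Epath (K : ℕ) : ℕ → St K → St K → ℤ
  | 0, a, b => if a = b then 1 else 0
  | m + 1, a, b => ∑ d : ZMod 2, Epath K m a (pull K d b) * wordWt K (bw K d b)

def Rop (K : ℕ) (v : St K → ℤ) : St K → ℤ :=
  fun b => ∑ d : ZMod 2, v (pull K d b) * wordWt K (bw K d b)

lemma Epath_succ (K m : ℕ) (a : St K) :
    Epath K (m + 1) a = Rop K (Epath K m a) := rfl

lemma Eit (K : ℕ) (m₀ : ℕ) (a : St K) :
    ∀ m : ℕ, Epath K (m₀ + m) a = (Rop K)^[m] (Epath K m₀ a) := by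
  intro m
  induction m with
  | zero => rfl
  | succ m ih =>
      rw [← Nat.add_assoc, Epath_succ, ih, Function.iterate_succ_apply']

lemma sum_zmod2 {M : Type*} [AddCommMonoid M] (f : ZMod 2 → M) :
    ∑ d : ZMod 2, f d = f 0 + f 1 := by
  have : (Finset.univ : Finset (ZMod 2)) = {0, 1} := by decide
  rw [this, Finset.sum_insert (by decide), Finset.sum_singleton]

lemma wordWt_congr (K : ℕ) {c c' : ℕ → ZMod 2} (h : ∀ l, l ≤ K + 3 → c l = c' l) :
    wordWt K c = wordWt K c' := by
  unfold wordWt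
  congr 1
  congr 1
  · exact Finset.prod_congr rfl fun l hl => h l (by have := Finset.mem_range.mp hl; omega)
  · rw [h (K+2) (by omega), h (K+3) le_rfl]

/- ### extVar helpers -/

lemma extVar_lt {n : ℕ} (x : Fin n → ZMod 2) {j : ℕ} (h : j < n) :
    extVar x j = x ⟨j, h⟩ := dif_pos h

lemma extVar_ge {n : ℕ} (x : Fin n → ZMod 2) {j : ℕ} (h : n ≤ j) :
    extVar x j = 0 := dif_neg (by omega)

lemma extVar_fin {n : ℕ} (x : Fin n → ZMod 2) (j : Fin n) : extVar x j.val = x j := by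
  rw [extVar_lt x j.isLt]

/- ### walk expansion -/

def zf (K : ℕ) {m : ℕ} (a : St K) (y : Fin m → ZMod 2) (p : ℕ) : ZMod 2 :=
  if p < K + 3 then extVar a p else extVar y (p - (K + 3))

def endSt (K : ℕ) {m : ℕ} (a : St K) (y : Fin m → ZMod 2) : St K :=
  ofFun K (fun j => zf K a y (m + j))

lemma zf_snoc (K : ℕ) {m : ℕ} (a : St K) (y' : Fin m → ZMod 2) (c : ZMod 2) {p : ℕ}
    (hp : p < m + (K + 3)) : zf K a (Fin.snoc y' c) p = zf K a y' p := by
  unfold zf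
  by_cases h : p < K + 3
  · rw [if_pos h, if_pos h]
  · rw [if_neg h, if_neg h]
    have hq : p - (K + 3) < m := by omega
    rw [extVar_lt _ (show p - (K+3) < m + 1 by omega), extVar_lt _ hq]
    have : (⟨p - (K+3), show p - (K+3) < m + 1 by omega⟩ : Fin (m+1))
        = Fin.castSucc ⟨p - (K+3), hq⟩ := rfl
    rw [this, Fin.snoc_castSucc]

lemma zf_snoc_last (K : ℕ) {m : ℕ} (a : St K) (y' : Fin m → ZMod 2) (c : ZMod 2) :
    zf K a (Fin.snoc y' c) (m + (K + 3)) = c := by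
  unfold zf
  rw [if_neg (by omega)]
  have h1 : m + (K + 3) - (K + 3) = m := by omega
  rw [h1, extVar_lt _ (show m < m + 1 by omega)]
  have : (⟨m, show m < m + 1 by omega⟩ : Fin (m+1)) = Fin.last m := rfl
  rw [this, Fin.snoc_last]

lemma walk (K : ℕ) : ∀ (m : ℕ) (a b : St K),
    Epath K m a b =
      ∑ y : Fin m → ZMod 2,
        (if b = endSt K a y then ∏ i ∈ range m, wordWt K (fun l => zf K a y (i + l)) else 0) := by
  intro m
  induction m with
  | zero =>
      intro a b
      rw [Fintype.sum_unique]
      have h1 : ∀ y : Fin 0 → ZMod 2, endSt K a y = a := by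
        intro y
        funext j
        show zf K a y (0 + j.val) = a j
        rw [Nat.zero_add]
        unfold zf
        rw [if_pos j.isLt, extVar_fin]
      rw [h1]
      simp only [Epath, Finset.range_zero, Finset.prod_empty]
      by_cases h : a = b
      · rw [if_pos h, if_pos h.symm]
      · rw [if_neg h, if_neg (fun hh => h hh.symm)]
  | succ m ih =>
      intro a b
      -- LHS
      show (∑ d : ZMod 2, Epath K m a (pull K d b) * wordWt K (bw K d b)) = _
      have hL : (∑ d : ZMod 2, Epath K m a (pull K d b) * wordWt K (bw K d b))
          = ∑ d : ZMod 2, ∑ y' : Fin m → ZMod 2,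
              (if pull K d b = endSt K a y' then
                (∏ i ∈ range m, wordWt K (fun l => zf K a y' (i + l))) * wordWt K (bw K d b)
               else 0) := by
        refine Finset.sum_congr rfl fun d _ => ?_
        rw [ih, Finset.sum_mul]
        refine Finset.sum_congr rfl fun y' _ => ?_
        rw [ite_mul, zero_mul]
      rw [hL, Finset.sum_comm]
      -- RHS reindex by snoc
      conv_rhs => rw [← Equiv.sum_comp (Fin.snocEquiv (fun _ => ZMod 2)),
        Fintype.sum_prod_type, Finset.sum_comm]
      refine Finset.sum_congr rfl fun y' _ => ?_
      -- collapse inner sums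
      set d₀ : ZMod 2 := zf K a y' m with hd₀
      set c₀ : ZMod 2 := b ⟨K + 2, by omega⟩ with hc₀
      have ePair : ∀ c : ZMod 2,
          (Fin.snocEquiv (fun _ => ZMod 2)) (c, y') = Fin.snoc y' c := fun c => rfl
      have hdsum : (∑ d : ZMod 2,
          (if pull K d b = endSt K a y' then
            (∏ i ∈ range m, wordWt K (fun l => zf K a y' (i + l))) * wordWt K (bw K d b)
           else 0))
          = (if pull K d₀ b = endSt K a y' then
            (∏ i ∈ range m, wordWt K (fun l => zf K a y' (i + l))) * wordWt K (bw K d₀ b)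
           else 0) := by
        refine Fintype.sum_eq_single d₀ (fun d hd => ?_)
        rw [if_neg]
        intro hcond
        apply hd
        have := congrFun hcond ⟨0, by omega⟩
        have h1 : pull K d b ⟨0, by omega⟩ = d := rfl
        have h2 : endSt K a y' ⟨0, by omega⟩ = zf K a y' (m + 0) := rfl
        rw [h1, h2, Nat.add_zero] at this
        rw [this, hd₀]
      rw [hdsum]
      have hcsum : (∑ c : ZMod 2,
          (if b = endSt K a ((Fin.snocEquiv (fun _ => ZMod 2)) (c, y')) then
            ∏ i ∈ range (m+1),
              wordWt K (fun l => zf K a ((Fin.snocEquiv (fun _ => ZMod 2)) (c, y')) (i + l))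
           else 0))
          = (if b = endSt K a (Fin.snoc y' c₀) then
            ∏ i ∈ range (m+1), wordWt K (fun l => zf K a (Fin.snoc y' c₀) (i + l))
           else 0) := by
        refine Fintype.sum_eq_single c₀ (fun c hc => ?_) |>.trans (by rw [ePair])
        rw [ePair]
        rw [if_neg]
        intro hcond
        apply hc
        have := congrFun hcond ⟨K + 2, by omega⟩
        have h2 : endSt K a (Fin.snoc y' c) ⟨K + 2, by omega⟩
            = zf K a (Fin.snoc y' c) (m + 1 + (K + 2)) := rfl
        rw [h2] at this
        have h3 : m + 1 + (K + 2) = m + (K + 3) := by omega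
        rw [h3, zf_snoc_last] at this
        rw [← this, hc₀]
      rw [hcsum]
      -- now single terms; prove equality
      have hcond : (pull K d₀ b = endSt K a y') ↔ (b = endSt K a (Fin.snoc y' c₀)) := by
        constructor
        · intro h
          funext j
          show b j = zf K a (Fin.snoc y' c₀) (m + 1 + j.val)
          by_cases hj : j.val = K + 2
          · have hj' : j = ⟨K + 2, by omega⟩ := Fin.ext hj
            have h3 : m + 1 + j.val = m + (K + 3) := by omega
            rw [h3, zf_snoc_last, hj', hc₀]
          · have hjlt : j.val < K + 2 := by omega
            have h3 : m + 1 + j.val < m + (K + 3) := by omega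
            rw [zf_snoc K a y' c₀ h3]
            have hcomp := congrFun h ⟨j.val + 1, by omega⟩
            have h4 : pull K d₀ b ⟨j.val + 1, by omega⟩ = extVar b j.val := by
              show (if j.val + 1 = 0 then d₀ else extVar b (j.val + 1 - 1)) = extVar b j.val
              rw [if_neg (by omega)]
              congr 1
            have h5 : endSt K a y' ⟨j.val + 1, by omega⟩ = zf K a y' (m + (j.val + 1)) := rfl
            rw [h4, h5] at hcomp
            rw [extVar_fin] at hcomp
            have h6 : m + (j.val + 1) = m + 1 + j.val := by omega
            rw [h6] at hcomp
            exact hcomp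
        · intro h
          funext j
          by_cases hj : j.val = 0
          · have hj' : j = ⟨0, by omega⟩ := Fin.ext hj
            rw [hj']
            show d₀ = endSt K a y' ⟨0, by omega⟩
            rfl
          · show (if j.val = 0 then d₀ else extVar b (j.val - 1)) = endSt K a y' j
            rw [if_neg hj]
            have hcomp := congrFun h ⟨j.val - 1, by omega⟩
            have h2 : endSt K a (Fin.snoc y' c₀) ⟨j.val - 1, by omega⟩
                = zf K a (Fin.snoc y' c₀) (m + 1 + (j.val - 1)) := rfl
            have h3 : m + 1 + (j.val - 1) = m + j.val := by omega
            have h4 : m + j.val < m + (K + 3) := by omega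
            rw [h2, h3, zf_snoc K a y' c₀ h4] at hcomp
            rw [extVar_lt b (show j.val - 1 < K + 3 by omega)]
            have h5 : (⟨j.val - 1, show j.val - 1 < K + 3 by omega⟩ : Fin (K+3))
                = ⟨j.val - 1, by omega⟩ := rfl
            rw [h5, hcomp]
            rfl
      by_cases h : pull K d₀ b = endSt K a y'
      · rw [if_pos h, if_pos (hcond.mp h)]
        rw [Finset.prod_range_succ]
        congr 1
        · refine Finset.prod_congr rfl fun i hi => ?_
          have hi' : i < m := Finset.mem_range.mp hi
          refine wordWt_congr K fun l hl => ?_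
          exact (zf_snoc K a y' c₀ (by omega)).symm
        · refine (wordWt_congr K fun l hl => ?_).symm
          show zf K a (Fin.snoc y' c₀) (m + l) = bw K d₀ b l
          by_cases hl0 : l = 0
          · rw [hl0]
            show zf K a (Fin.snoc y' c₀) (m + 0) = d₀
            rw [zf_snoc K a y' c₀ (by omega), Nat.add_zero]
          · by_cases hlK : l = K + 3
            · rw [hlK, zf_snoc_last]
              show c₀ = bw K d₀ b (K + 3)
              show c₀ = extVar b (K + 3 - 1)
              rw [extVar_lt b (show K + 3 - 1 < K + 3 by omega), hc₀]
              congr 1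
            · have hlt : l < K + 3 := by omega
              rw [zf_snoc K a y' c₀ (by omega)]
              have hcomp := congrFun h ⟨l, hlt⟩
              have h4 : pull K d₀ b ⟨l, hlt⟩ = extVar b (l - 1) := if_neg hl0
              have h5 : endSt K a y' ⟨l, hlt⟩ = zf K a y' (m + l) := rfl
              rw [h4, h5] at hcomp
              show zf K a y' (m + l) = bw K d₀ b l
              rw [← hcomp]
              show extVar b (l - 1) = (if l = 0 then d₀ else extVar b (l - 1))
              rw [if_neg hl0]
      · rw [if_neg h, if_neg (fun hh => h (hcond.mpr hh))]
/- ### exponential sum as cyclic window product -/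

lemma chiG (K n : ℕ) (x : Fin n → ZMod 2) :
    (-1 : ℤ) ^ (Gfun (K + 4) n x).val
      = ∏ i ∈ range n, wordWt K (fun l => extVar x ((i + l) % n)) := by
  rw [neg_one_pow_val]
  unfold Gfun rotOffsets
  have h1 : (K + 4) - 1 = K + 3 := by omega
  have h2 : (K + 4) - 2 = K + 2 := by omega
  rw [h1, h2, ← Finset.sum_add_distrib, ← Finset.sum_add_distrib, chi_sum]
  refine Finset.prod_congr rfl fun i _ => ?_
  unfold wordWt
  congr 1
  have hins : (K + 3) ∉ range (K + 2) := by simp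
  rw [Finset.prod_insert hins]
  have e3 : ∏ l ∈ range (K + 3), extVar x ((i + l) % n)
      = (∏ l ∈ range (K + 2), extVar x ((i + l) % n)) * extVar x ((i + (K + 2)) % n) :=
    Finset.prod_range_succ _ (K + 2)
  have e4 : ∏ l ∈ range (K + 4), extVar x ((i + l) % n)
      = ((∏ l ∈ range (K + 2), extVar x ((i + l) % n)) * extVar x ((i + (K + 2)) % n))
          * extVar x ((i + (K + 3)) % n) := by
    rw [Finset.prod_range_succ _ (K + 3), Finset.prod_range_succ _ (K + 2)]
  rw [e3, e4]
  unfold or2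
  ring

lemma boolExpSum_eq (K n : ℕ) :
    boolExpSum n (Gfun (K + 4) n)
      = ∑ x : Fin n → ZMod 2, ∏ i ∈ range n, wordWt K (fun l => extVar x ((i + l) % n)) :=
  Finset.sum_congr rfl fun x _ => chiG K n x

/- ### cyclic shift of a product -/

lemma prod_shift (n s : ℕ) (hs : s ≤ n) (F : ℕ → ℤ) :
    ∏ i ∈ range n, F ((i + s) % n) = ∏ i ∈ range n, F i := by
  rcases Nat.eq_zero_or_pos n with h0 | hpos
  · subst h0; simp
  refine Finset.prod_nbij' (fun i => (i + s) % n) (fun j => (j + (n - s)) % n)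
    (fun a _ => Finset.mem_range.mpr (Nat.mod_lt _ hpos))
    (fun a _ => Finset.mem_range.mpr (Nat.mod_lt _ hpos)) ?_ ?_ (fun a _ => rfl)
  · intro a ha
    have ha' : a < n := Finset.mem_range.mp ha
    show ((a + s) % n + (n - s)) % n = a
    rw [Nat.mod_add_mod]
    have : a + s + (n - s) = a + n := by omega
    rw [this, Nat.add_mod_right, Nat.mod_eq_of_lt ha']
  · intro a ha
    have ha' : a < n := Finset.mem_range.mp ha
    show ((a + (n - s)) % n + s) % n = a
    rw [Nat.mod_add_mod]
    have : a + (n - s) + s = a + n := by omega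
    rw [this, Nat.add_mod_right, Nat.mod_eq_of_lt ha']

/- ### trace formula -/

def lastSt (K n : ℕ) (y : Fin n → ZMod 2) : St K :=
  ofFun K (fun j => extVar y (n - (K + 3) + j))

lemma trace_eq (K n : ℕ) (hn : K + 3 ≤ n) :
    (∑ a : St K, Epath K n a a) = boolExpSum n (Gfun (K + 4) n) := by
  rw [boolExpSum_eq]
  have hend : ∀ (a : St K) (y : Fin n → ZMod 2), endSt K a y = lastSt K n y := by
    intro a y
    funext j
    show zf K a y (n + j.val) = extVar y (n - (K + 3) + j.val)
    unfold zf
    rw [if_neg (by omega)]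
    congr 1
    omega
  have step1 : (∑ a : St K, Epath K n a a)
      = ∑ y : Fin n → ZMod 2, ∏ i ∈ range n,
          wordWt K (fun l => zf K (lastSt K n y) y (i + l)) := by
    have : (∑ a : St K, Epath K n a a)
        = ∑ a : St K, ∑ y : Fin n → ZMod 2,
            (if a = lastSt K n y then
              ∏ i ∈ range n, wordWt K (fun l => zf K a y (i + l)) else 0) := by
      refine Finset.sum_congr rfl fun a _ => ?_
      rw [walk K n a a]
      exact Finset.sum_congr rfl fun y _ => by rw [hend a y]
    rw [this, Finset.sum_comm]
    refine Finset.sum_congr rfl fun y _ => ?_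
    refine Fintype.sum_eq_single (lastSt K n y) (fun a ha => if_neg ha) |>.trans ?_
    rw [if_pos rfl]
  rw [step1]
  refine Finset.sum_congr rfl fun y _ => ?_
  have hz : ∀ p, p ≤ n + K + 2 →
      zf K (lastSt K n y) y p = extVar y ((p + (n - (K + 3))) % n) := by
    intro p hp
    unfold zf
    by_cases h : p < K + 3
    · rw [if_pos h]
      have h1 : extVar (lastSt K n y) p = extVar y (n - (K + 3) + p) := by
        rw [extVar_lt _ (show p < K + 3 by omega)]
        rfl
      rw [h1]
      have h2 : (p + (n - (K + 3))) % n = p + (n - (K + 3)) :=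
        Nat.mod_eq_of_lt (by omega)
      rw [h2]
      congr 1
      omega
    · rw [if_neg h]
      have h1 : p + (n - (K + 3)) = (p - (K + 3)) + n := by omega
      rw [h1, Nat.add_mod_right, Nat.mod_eq_of_lt (by omega)]
  have step2 : ∀ i ∈ range n,
      wordWt K (fun l => zf K (lastSt K n y) y (i + l))
        = wordWt K (fun l => extVar y (((i + (n - (K + 3))) % n + l) % n)) := by
    intro i hi
    have hi' : i < n := Finset.mem_range.mp hi
    refine wordWt_congr K fun l hl => ?_
    rw [hz (i + l) (by omega), Nat.mod_add_mod]
    have h7 : i + l + (n - (K + 3)) = i + (n - (K + 3)) + l := by omega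
    rw [h7]
  rw [Finset.prod_congr rfl step2]
  have := prod_shift n (n - (K + 3)) (by omega)
    (fun j => wordWt K (fun l => extVar y ((j + l) % n)))
  exact this
/- ### closed form of the (K+2)-step path sum -/

def zab (K : ℕ) (a b : St K) (p : ℕ) : ZMod 2 :=
  if p < K + 3 then extVar a p else extVar b (p - (K + 2))

def eF (K : ℕ) (i : ℕ) (b : St K) : ℤ :=
  chi ((∏ j ∈ range i, extVar b j) * or2 (extVar b i) (extVar b (i + 1)))

def rho (K : ℕ) (t : ℕ) (b : St K) : ℤ :=
  if t = 0 then (if extVar b 0 = 0 then 1 else 0)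
  else (if extVar b 0 = 1 then 1 else 0) * ∏ i ∈ Ico (K + 3 - t) (K + 2), eF K i b

def sig (K : ℕ) (b : St K) : ℤ :=
  (if extVar b 0 = 0 then 1 else 0) * chi (extVar b 1)

lemma zmod2_ne_one {v : ZMod 2} (h : ¬ v = 1) : v = 0 := by
  rcases zmod2_cases v with h0 | h1
  · exact h0
  · exact absurd h1 h

lemma Eclosed (K : ℕ) (a b : St K) :
    Epath K (K + 2) a b
      = if extVar b 0 = extVar a (K + 2) then
          ∏ i ∈ range (K + 2), wordWt K (fun l => zab K a b (i + l))
        else 0 := by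
  rw [walk K (K + 2) a b]
  set y₀ : Fin (K + 2) → ZMod 2 := fun q => extVar b (q.val + 1) with hy₀
  have hcollapse : (∑ y : Fin (K + 2) → ZMod 2,
      (if b = endSt K a y then ∏ i ∈ range (K + 2), wordWt K (fun l => zf K a y (i + l)) else 0))
      = (if b = endSt K a y₀ then ∏ i ∈ range (K + 2), wordWt K (fun l => zf K a y₀ (i + l)) else 0) := by
    refine Fintype.sum_eq_single y₀ (fun y hy => if_neg ?_)
    intro hcond
    apply hy
    funext q
    have hcomp := congrFun hcond ⟨q.val + 1, by omega⟩
    have h1 : endSt K a y ⟨q.val + 1, by omega⟩ = zf K a y ((K + 2) + (q.val + 1)) := rfl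
    rw [h1] at hcomp
    have h2 : zf K a y ((K + 2) + (q.val + 1)) = y q := by
      unfold zf
      rw [if_neg (by omega)]
      have h3 : (K + 2) + (q.val + 1) - (K + 3) = q.val := by omega
      rw [h3, extVar_fin]
    rw [h2] at hcomp
    show y q = extVar b (q.val + 1)
    rw [← hcomp, extVar_lt b (show q.val + 1 < K + 3 by omega)]
  rw [hcollapse]
  have hzz : ∀ p, zf K a y₀ p = zab K a b p := by
    intro p
    unfold zf zab
    by_cases h : p < K + 3
    · rw [if_pos h, if_pos h]
    · rw [if_neg h, if_neg h]
      by_cases h2 : p - (K + 3) < K + 2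
      · rw [extVar_lt _ h2]
        show extVar b (p - (K + 3) + 1) = extVar b (p - (K + 2))
        congr 1
        omega
      · rw [extVar_ge _ (by omega), extVar_ge _ (by omega)]
  have hcond : (b = endSt K a y₀) ↔ (extVar b 0 = extVar a (K + 2)) := by
    constructor
    · intro h
      have hcomp := congrFun h ⟨0, by omega⟩
      have h1 : endSt K a y₀ ⟨0, by omega⟩ = zf K a y₀ ((K + 2) + 0) := rfl
      rw [h1] at hcomp
      have h2 : zf K a y₀ ((K + 2) + 0) = extVar a (K + 2) := by
        unfold zf
        rw [if_pos (show K + 2 + 0 < K + 3 by omega)]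
      rw [h2] at hcomp
      rw [extVar_lt b (show (0:ℕ) < K + 3 by omega)]
      exact hcomp
    · intro h
      funext j
      show b j = zf K a y₀ ((K + 2) + j.val)
      by_cases hj : j.val = 0
      · have hj' : j = ⟨0, by omega⟩ := Fin.ext hj
        rw [hj']
        have h2 : zf K a y₀ ((K + 2) + (0:ℕ)) = extVar a (K + 2) := by
          unfold zf
          rw [if_pos (show K + 2 + 0 < K + 3 by omega)]
        show b ⟨0, by omega⟩ = zf K a y₀ ((K + 2) + (0:ℕ))
        rw [h2, ← h, extVar_lt b (show (0:ℕ) < K + 3 by omega)]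
      · have h2 : zf K a y₀ ((K + 2) + j.val) = y₀ ⟨j.val - 1, by omega⟩ := by
          unfold zf
          rw [if_neg (by omega)]
          have h3 : (K + 2) + j.val - (K + 3) = j.val - 1 := by omega
          rw [h3]
          rw [extVar_lt _ (show j.val - 1 < K + 2 by omega)]
        rw [h2, hy₀]
        show b j = extVar b (j.val - 1 + 1)
        have h4 : j.val - 1 + 1 = j.val := by omega
        rw [h4, extVar_fin]
  by_cases h : extVar b 0 = extVar a (K + 2)
  · rw [if_pos (hcond.mpr h), if_pos h]
    exact Finset.prod_congr rfl fun i _ => wordWt_congr K fun l _ => hzz (i + l)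
  · rw [if_neg (fun hh => h (hcond.mp hh)), if_neg h]

/- ### window evaluation lemmas -/

lemma Wzero (K : ℕ) (a b : St K) (i l₀ : ℕ) (hl : l₀ < K + 2)
    (hz : zab K a b (i + l₀) = 0) :
    wordWt K (fun l => zab K a b (i + l)) = 1 := by
  unfold wordWt
  have h : ∏ l ∈ range (K + 2), zab K a b (i + l) = 0 :=
    Finset.prod_eq_zero (Finset.mem_range.mpr hl) hz
  rw [h, zero_mul]
  rfl

lemma Wwin (K : ℕ) (a b : St K) (i : ℕ) (hi1 : 1 ≤ i) (hi2 : i < K + 2)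
    (ha : ∀ p, i ≤ p → p < K + 3 → extVar a p = 1) (hb : extVar b 0 = 1) :
    wordWt K (fun l => zab K a b (i + l)) = eF K i b := by
  obtain ⟨i', rfl⟩ : ∃ i', i = i' + 1 := ⟨i - 1, by omega⟩
  unfold wordWt eF
  simp only []
  have hK2 : zab K a b (i' + 1 + (K + 2)) = extVar b (i' + 1) := by
    unfold zab
    rw [if_neg (by omega)]
    congr 1
    omega
  have hK3 : zab K a b (i' + 1 + (K + 3)) = extVar b (i' + 1 + 1) := by
    unfold zab
    rw [if_neg (by omega)]
    congr 1
    omega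
  rw [hK2, hK3]
  congr 1
  congr 1
  -- monomial equality
  have hsplit : ∏ l ∈ range (K + 2), zab K a b (i' + 1 + l)
      = (∏ l ∈ Ico 0 (K + 2 - i'), zab K a b (i' + 1 + l))
          * ∏ l ∈ Ico (K + 2 - i') (K + 2), zab K a b (i' + 1 + l) := by
    rw [Finset.range_eq_Ico]
    exact (Finset.prod_Ico_consecutive _ (by omega) (by omega)).symm
  rw [hsplit]
  have hleft : ∏ l ∈ Ico 0 (K + 2 - i'), zab K a b (i' + 1 + l) = 1 := by
    apply Finset.prod_eq_one
    intro l hl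
    obtain ⟨_, hl2⟩ := Finset.mem_Ico.mp hl
    unfold zab
    rw [if_pos (by omega)]
    exact ha (i' + 1 + l) (by omega) (by omega)
  have hright : ∏ l ∈ Ico (K + 2 - i') (K + 2), zab K a b (i' + 1 + l)
      = ∏ q ∈ range i', extVar b (q + 1) := by
    rw [Finset.prod_Ico_eq_prod_range]
    have hc : K + 2 - (K + 2 - i') = i' := by omega
    rw [hc]
    refine Finset.prod_congr rfl fun q hq => ?_
    have hq' : q < i' := Finset.mem_range.mp hq
    unfold zab
    rw [if_neg (by omega)]
    congr 1
    omega
  rw [hleft, hright, one_mul]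
  rw [Finset.prod_range_succ']
  rw [hb, mul_one]
/- ### row classification -/

lemma classC4 (K : ℕ) (a : St K) (t : ℕ) (ht1 : 1 ≤ t) (ht2 : t ≤ K + 2)
    (hones : ∀ p, K + 3 - t ≤ p → p < K + 3 → extVar a p = 1)
    (hzero : extVar a (K + 2 - t) = 0) :
    ∀ b, Epath K (K + 2) a b = rho K t b := by
  intro b
  rw [Eclosed]
  have haK : extVar a (K + 2) = 1 := hones (K + 2) (by omega) (by omega)
  have hrho : rho K t b
      = (if extVar b 0 = 1 then 1 else 0) * ∏ i ∈ Ico (K + 3 - t) (K + 2), eF K i b := by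
    unfold rho
    rw [if_neg (by omega)]
  rcases zmod2_cases (extVar b 0) with hb0 | hb1
  · rw [hrho, hb0, haK,
      if_neg (show ¬(0 : ZMod 2) = 1 by decide),
      if_neg (show ¬(0 : ZMod 2) = 1 by decide), zero_mul]
  · rw [hrho, hb1, haK, if_pos rfl, if_pos rfl, one_mul]
    have hsplit : ∏ i ∈ range (K + 2), wordWt K (fun l => zab K a b (i + l))
        = (∏ i ∈ Ico 0 (K + 3 - t), wordWt K (fun l => zab K a b (i + l)))
            * ∏ i ∈ Ico (K + 3 - t) (K + 2), wordWt K (fun l => zab K a b (i + l)) := by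
      rw [Finset.range_eq_Ico]
      exact (Finset.prod_Ico_consecutive _ (by omega) (by omega)).symm
    rw [hsplit]
    have hleft : ∏ i ∈ Ico 0 (K + 3 - t), wordWt K (fun l => zab K a b (i + l)) = 1 := by
      apply Finset.prod_eq_one
      intro i hi
      obtain ⟨_, hi2⟩ := Finset.mem_Ico.mp hi
      refine Wzero K a b i (K + 2 - t - i) (by omega) ?_
      have h1 : i + (K + 2 - t - i) = K + 2 - t := by omega
      rw [h1]
      show (if K + 2 - t < K + 3 then extVar a (K + 2 - t) else _) = 0
      rw [if_pos (by omega)]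
      exact hzero
    have hright : ∏ i ∈ Ico (K + 3 - t) (K + 2), wordWt K (fun l => zab K a b (i + l))
        = ∏ i ∈ Ico (K + 3 - t) (K + 2), eF K i b := by
      refine Finset.prod_congr rfl fun i hi => ?_
      obtain ⟨hi1, hi2⟩ := Finset.mem_Ico.mp hi
      exact Wwin K a b i (by omega) hi2 (fun p hp1 hp2 => hones p (by omega) hp2) hb1
    rw [hleft, hright, one_mul]

lemma classC1 (K : ℕ) (a : St K) (hones : ∀ p, p < K + 3 → extVar a p = 1) :
    ∀ b, Epath K (K + 2) a b = -(rho K (K + 2) b) := by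
  intro b
  rw [Eclosed]
  have haK : extVar a (K + 2) = 1 := hones (K + 2) (by omega)
  have hrho : rho K (K + 2) b
      = (if extVar b 0 = 1 then 1 else 0) * ∏ i ∈ Ico 1 (K + 2), eF K i b := by
    unfold rho
    rw [if_neg (by omega), show K + 3 - (K + 2) = 1 from by omega]
  rcases zmod2_cases (extVar b 0) with hb0 | hb1
  · rw [hrho, hb0, haK,
      if_neg (show ¬(0 : ZMod 2) = 1 by decide),
      if_neg (show ¬(0 : ZMod 2) = 1 by decide), zero_mul, neg_zero]
  · rw [hrho, hb1, haK, if_pos rfl, if_pos rfl, one_mul]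
    rw [Finset.range_eq_Ico, Finset.prod_eq_prod_Ico_succ_bot (by omega : 0 < K + 2)]
    have h0 : wordWt K (fun l => zab K a b (0 + l)) = -1 := by
      unfold wordWt
      simp only []
      have hmon : ∏ l ∈ range (K + 2), zab K a b (0 + l) = 1 := by
        apply Finset.prod_eq_one
        intro l hl
        have hl' : l < K + 2 := Finset.mem_range.mp hl
        show (if 0 + l < K + 3 then extVar a (0 + l) else _) = 1
        rw [if_pos (by omega)]
        exact hones (0 + l) (by omega)
      have hK2 : zab K a b (0 + (K + 2)) = 1 := by
        show (if 0 + (K + 2) < K + 3 then extVar a (0 + (K + 2)) else _) = 1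
        rw [if_pos (by omega)]
        show extVar a (0 + (K + 2)) = 1
        rw [Nat.zero_add]
        exact haK
      rw [hmon, hK2, one_mul, or2_one]
      rfl
    have hrest : ∏ i ∈ Ico 1 (K + 2), wordWt K (fun l => zab K a b (i + l))
        = ∏ i ∈ Ico 1 (K + 2), eF K i b := by
      refine Finset.prod_congr rfl fun i hi => ?_
      obtain ⟨hi1, hi2⟩ := Finset.mem_Ico.mp hi
      exact Wwin K a b i hi1 hi2 (fun p hp1 hp2 => hones p hp2) hb1
    rw [h0, hrest]
    ring

lemma classC2 (K : ℕ) (a : St K) (hones : ∀ p, p < K + 2 → extVar a p = 1)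
    (hz : extVar a (K + 2) = 0) :
    ∀ b, Epath K (K + 2) a b = sig K b := by
  intro b
  rw [Eclosed]
  unfold sig
  rcases zmod2_cases (extVar b 0) with hb0 | hb1
  · rw [hb0, hz, if_pos rfl, if_pos rfl, one_mul]
    rw [Finset.range_eq_Ico, Finset.prod_eq_prod_Ico_succ_bot (by omega : 0 < K + 2)]
    have h0 : wordWt K (fun l => zab K a b (0 + l)) = chi (extVar b 1) := by
      unfold wordWt
      simp only []
      have hmon : ∏ l ∈ range (K + 2), zab K a b (0 + l) = 1 := by
        apply Finset.prod_eq_one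
        intro l hl
        have hl' : l < K + 2 := Finset.mem_range.mp hl
        show (if 0 + l < K + 3 then extVar a (0 + l) else _) = 1
        rw [if_pos (by omega)]
        exact hones (0 + l) (by omega)
      have hK2 : zab K a b (0 + (K + 2)) = 0 := by
        show (if 0 + (K + 2) < K + 3 then extVar a (0 + (K + 2)) else _) = 0
        rw [if_pos (by omega)]
        show extVar a (0 + (K + 2)) = 0
        rw [Nat.zero_add]
        exact hz
      have hK3 : zab K a b (0 + (K + 3)) = extVar b 1 := by
        show (if 0 + (K + 3) < K + 3 then _ else extVar b (0 + (K + 3) - (K + 2))) = extVar b 1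
        rw [if_neg (by omega)]
        congr 1
        omega
      rw [hmon, hK2, hK3, one_mul, or2_zero]
    have hrest : ∏ i ∈ Ico 1 (K + 2), wordWt K (fun l => zab K a b (i + l)) = 1 := by
      apply Finset.prod_eq_one
      intro i hi
      obtain ⟨hi1, hi2⟩ := Finset.mem_Ico.mp hi
      refine Wzero K a b i (K + 2 - i) (by omega) ?_
      have h1 : i + (K + 2 - i) = K + 2 := by omega
      rw [h1]
      show (if K + 2 < K + 3 then extVar a (K + 2) else _) = 0
      rw [if_pos (by omega)]
      exact hz
    rw [h0, hrest, mul_one]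
  · rw [hb1, hz, if_neg (by decide), if_neg (by decide), zero_mul]

lemma classC3 (K : ℕ) (a : St K) (hz : extVar a (K + 2) = 0)
    (i₀ : ℕ) (hi₀ : i₀ < K + 2) (hzi : extVar a i₀ = 0) :
    ∀ b, Epath K (K + 2) a b = rho K 0 b := by
  intro b
  rw [Eclosed]
  unfold rho
  rw [if_pos rfl]
  rcases zmod2_cases (extVar b 0) with hb0 | hb1
  · rw [hb0, hz, if_pos rfl, if_pos rfl]
    apply Finset.prod_eq_one
    intro i hi
    have hi' : i < K + 2 := Finset.mem_range.mp hi
    rcases Nat.eq_zero_or_pos i with h0 | hpos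
    · subst h0
      refine Wzero K a b 0 i₀ hi₀ ?_
      show (if 0 + i₀ < K + 3 then extVar a (0 + i₀) else _) = 0
      rw [if_pos (by omega)]
      show extVar a (0 + i₀) = 0
      rw [Nat.zero_add]
      exact hzi
    · refine Wzero K a b i (K + 2 - i) (by omega) ?_
      have h1 : i + (K + 2 - i) = K + 2 := by omega
      rw [h1]
      show (if K + 2 < K + 3 then extVar a (K + 2) else _) = 0
      rw [if_pos (by omega)]
      exact hz
  · rw [hb1, hz, if_neg (by decide), if_neg (by decide)]

lemma Eclass (K : ℕ) (a : St K) :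
    (∀ b, Epath K (K + 2) a b = rho K 0 b) ∨
    (∃ t, 1 ≤ t ∧ t ≤ K + 2 ∧ ∀ b, Epath K (K + 2) a b = rho K t b) ∨
    (∀ b, Epath K (K + 2) a b = sig K b) ∨
    (∀ b, Epath K (K + 2) a b = -(rho K (K + 2) b)) := by
  classical
  by_cases hall : ∀ p, p < K + 3 → extVar a p = 1
  · exact Or.inr (Or.inr (Or.inr (classC1 K a hall)))
  push_neg at hall
  obtain ⟨q, hq1, hq2⟩ := hall
  have hq0 : extVar a q = 0 := zmod2_ne_one hq2
  set P : ℕ → Prop := fun j => ∀ p, K + 3 - j ≤ p → p < K + 3 → extVar a p = 1 with hP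
  have hPdec : DecidablePred P := fun j => by
    unfold P
    infer_instance
  set t := @Nat.findGreatest P hPdec (K + 2) with htdef
  have hPt : P t := by
    refine @Nat.findGreatest_spec 0 P hPdec (K + 2) (by omega) ?_
    intro p hp1 hp2
    omega
  have htle : t ≤ K + 2 := Nat.findGreatest_le (K + 2)
  rcases Nat.eq_zero_or_pos t with ht0 | htpos
  · -- t = 0 : a (K+2) = 0
    have hnP1 : ¬ P 1 := by
      refine @Nat.findGreatest_is_greatest 1 P hPdec (K + 2) (by omega) (by omega)
    have haK : extVar a (K + 2) = 0 := by
      rcases zmod2_cases (extVar a (K + 2)) with h0 | h1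
      · exact h0
      · exfalso
        apply hnP1
        intro p hp1 hp2
        have hp : p = K + 2 := by omega
        rw [hp]
        exact h1
    by_cases h2 : ∀ p, p < K + 2 → extVar a p = 1
    · exact Or.inr (Or.inr (Or.inl (classC2 K a h2 haK)))
    · push_neg at h2
      obtain ⟨i₀, hi₀1, hi₀2⟩ := h2
      exact Or.inl (classC3 K a haK i₀ hi₀1 (zmod2_ne_one hi₀2))
  · -- 1 ≤ t ≤ K + 2 : C4
    have hzero : extVar a (K + 2 - t) = 0 := by
      rcases Nat.lt_or_ge t (K + 2) with hlt | hge
      · have hnP : ¬ P (t + 1) :=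
          @Nat.findGreatest_is_greatest (t+1) P hPdec (K + 2) (by omega) (by omega)
        by_contra hne
        apply hnP
        intro p hp1 hp2
        rcases Nat.lt_or_ge p (K + 3 - t) with hp | hp
        · have hpe : p = K + 2 - t := by omega
          rw [hpe]
          rcases zmod2_cases (extVar a (K + 2 - t)) with h0 | h1
          · exact absurd h0 hne
          · exact h1
        · exact hPt p hp hp2
      · -- t = K + 2 : the zero must be at position 0
        have hte : t = K + 2 := by omega
        have hqz : q = 0 := by
          by_contra hqne
          have : extVar a q = 1 := hPt q (by omega) hq1
          rw [this] at hq0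
          exact absurd hq0 (by decide)
        rw [hte]
        have h1 : K + 2 - (K + 2) = 0 := by omega
        rw [h1, ← hqz]
        exact hq0
    exact Or.inr (Or.inl ⟨t, htpos, htle, classC4 K a t htpos htle hPt hzero⟩)
/- ### the transfer relations -/

lemma chi_one : chi 1 = -1 := by decide

lemma Rop_apply (K : ℕ) (v : St K → ℤ) (b : St K) :
    Rop K v b = v (pull K 0 b) * wordWt K (bw K 0 b) + v (pull K 1 b) * wordWt K (bw K 1 b) :=
  sum_zmod2 _

lemma extVar_pull (K : ℕ) (d : ZMod 2) (b : St K) (j : ℕ) (hj : j < K + 3) :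
    extVar (pull K d b) j = if j = 0 then d else extVar b (j - 1) := by
  rw [extVar_lt _ hj]
  rfl

lemma wordWt_bw0 (K : ℕ) (b : St K) : wordWt K (bw K 0 b) = 1 := by
  unfold wordWt
  have h : ∏ l ∈ range (K + 2), bw K 0 b l = 0 := by
    refine Finset.prod_eq_zero (Finset.mem_range.mpr (show 0 < K + 2 by omega)) ?_
    rfl
  rw [h, zero_mul]
  rfl

lemma wordWt_bw1 (K : ℕ) (b : St K) : wordWt K (bw K 1 b) = eF K (K + 1) b := by
  unfold wordWt eF
  have hmon : ∏ l ∈ range (K + 2), bw K 1 b l = ∏ q ∈ range (K + 1), extVar b q := by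
    rw [Finset.prod_range_succ']
    have h1 : ∀ q, bw K 1 b (q + 1) = extVar b q := fun q => rfl
    have h2 : bw K 1 b 0 = 1 := rfl
    rw [h2, mul_one]
    exact Finset.prod_congr rfl fun q _ => h1 q
  have hK2 : bw K 1 b (K + 2) = extVar b (K + 1) := rfl
  have hK3 : bw K 1 b (K + 3) = extVar b (K + 2) := rfl
  rw [hmon, hK2, hK3]

lemma e_one (K : ℕ) (b : St K) (i : ℕ) (hi : 1 ≤ i) (hb : extVar b 0 = 0) :
    eF K i b = 1 := by
  unfold eF
  have h : ∏ j ∈ range i, extVar b j = 0 :=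
    Finset.prod_eq_zero (Finset.mem_range.mpr (show 0 < i by omega)) hb
  rw [h, zero_mul]
  rfl

lemma eS (K : ℕ) (b : St K) (i : ℕ) (hi1 : 1 ≤ i) (hi2 : i ≤ K + 1) :
    eF K i (pull K 1 b) = eF K (i - 1) b := by
  obtain ⟨i', rfl⟩ : ∃ i', i = i' + 1 := ⟨i - 1, by omega⟩
  unfold eF
  have hmon : ∏ j ∈ range (i' + 1), extVar (pull K 1 b) j = ∏ q ∈ range i', extVar b q := by
    rw [Finset.prod_range_succ']
    have h2 : extVar (pull K 1 b) 0 = 1 := by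
      rw [extVar_pull K 1 b 0 (by omega)]
      rfl
    rw [h2, mul_one]
    refine Finset.prod_congr rfl fun q hq => ?_
    have hq' : q < i' := Finset.mem_range.mp hq
    rw [extVar_pull K 1 b (q + 1) (by omega)]
    rw [if_neg (by omega), Nat.add_sub_cancel]
  have h3 : extVar (pull K 1 b) (i' + 1) = extVar b i' := by
    rw [extVar_pull K 1 b (i' + 1) (by omega), if_neg (by omega), Nat.add_sub_cancel]
  have h4 : extVar (pull K 1 b) (i' + 1 + 1) = extVar b (i' + 1) := by
    rw [extVar_pull K 1 b (i' + 1 + 1) (by omega), if_neg (by omega), Nat.add_sub_cancel]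
  rw [hmon, h3, h4]
  rfl

lemma rho_pull0_eq_zero (K : ℕ) (b : St K) (t : ℕ) (ht : 1 ≤ t) :
    rho K t (pull K 0 b) = 0 := by
  unfold rho
  rw [if_neg (by omega)]
  have h : extVar (pull K 0 b) 0 = 0 := by
    rw [extVar_pull K 0 b 0 (by omega)]
    rfl
  rw [h, if_neg (by decide), zero_mul]

lemma rel0 (K : ℕ) (b : St K) : Rop K (rho K 0) b = rho K 0 b + rho K 1 b := by
  rw [Rop_apply]
  have h1 : rho K 0 (pull K 0 b) = 1 := by
    unfold rho
    rw [if_pos rfl]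
    have h : extVar (pull K 0 b) 0 = 0 := by
      rw [extVar_pull K 0 b 0 (by omega)]
      rfl
    rw [h, if_pos rfl]
  have h2 : rho K 0 (pull K 1 b) = 0 := by
    unfold rho
    rw [if_pos rfl]
    have h : extVar (pull K 1 b) 0 = 1 := by
      rw [extVar_pull K 1 b 0 (by omega)]
      rfl
    rw [h, if_neg (by decide)]
  rw [h1, h2, wordWt_bw0, zero_mul, one_mul, add_zero]
  have h3 : rho K 1 b = (if extVar b 0 = 1 then 1 else 0) := by
    unfold rho
    rw [if_neg (by omega), show K + 3 - 1 = K + 2 from by omega, Finset.Ico_self,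
      Finset.prod_empty, mul_one]
  rw [h3]
  unfold rho
  rw [if_pos rfl]
  rcases zmod2_cases (extVar b 0) with h | h
  · rw [h, if_pos rfl, if_neg (by decide)]
    ring
  · rw [h, if_neg (by decide), if_pos rfl]
    ring

lemma rho_pull1 (K : ℕ) (b : St K) (t : ℕ) (ht1 : 1 ≤ t) (ht2 : t ≤ K + 2) :
    rho K t (pull K 1 b) = ∏ i ∈ Ico (K + 3 - t) (K + 2), eF K (i - 1) b := by
  unfold rho
  rw [if_neg (by omega)]
  have h : extVar (pull K 1 b) 0 = 1 := by
    rw [extVar_pull K 1 b 0 (by omega)]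
    rfl
  rw [h, if_pos rfl, one_mul]
  refine Finset.prod_congr rfl fun i hi => ?_
  obtain ⟨hi1, hi2⟩ := Finset.mem_Ico.mp hi
  exact eS K b i (by omega) (by omega)

lemma relt (K : ℕ) (t : ℕ) (ht1 : 1 ≤ t) (ht2 : t ≤ K + 1) (b : St K) :
    Rop K (rho K t) b = rho K 0 b + rho K (t + 1) b := by
  rw [Rop_apply, rho_pull0_eq_zero K b t ht1, zero_mul, zero_add]
  rw [rho_pull1 K b t ht1 (by omega), wordWt_bw1]
  have hsh : ∏ i ∈ Ico (K + 3 - t) (K + 2), eF K (i - 1) b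
      = ∏ i ∈ Ico (K + 2 - t) (K + 1), eF K i b := by
    rw [Finset.prod_Ico_eq_prod_range, Finset.prod_Ico_eq_prod_range]
    rw [show K + 2 - (K + 3 - t) = t - 1 from by omega,
      show K + 1 - (K + 2 - t) = t - 1 from by omega]
    refine Finset.prod_congr rfl fun q hq => ?_
    rw [show K + 3 - t + q - 1 = K + 2 - t + q from by omega]
  rw [hsh, ← Finset.prod_Ico_succ_top (show K + 2 - t ≤ K + 1 from by omega)]
  have hrho1 : rho K (t + 1) b
      = (if extVar b 0 = 1 then 1 else 0) * ∏ i ∈ Ico (K + 2 - t) (K + 2), eF K i b := by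
    unfold rho
    rw [if_neg (by omega), show K + 3 - (t + 1) = K + 2 - t from by omega]
  have hrho0 : rho K 0 b = (if extVar b 0 = 0 then 1 else 0) := by
    unfold rho
    rw [if_pos rfl]
  rw [hrho1, hrho0]
  rcases zmod2_cases (extVar b 0) with h | h
  · rw [h, if_pos rfl, if_neg (by decide), zero_mul, add_zero]
    apply Finset.prod_eq_one
    intro i hi
    obtain ⟨hi1, _⟩ := Finset.mem_Ico.mp hi
    exact e_one K b i (by omega) h
  · rw [h, if_neg (by decide), if_pos rfl, one_mul, zero_add]

lemma relk (K : ℕ) (b : St K) :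
    Rop K (rho K (K + 2)) b = sig K b - rho K (K + 2) b := by
  rw [Rop_apply, rho_pull0_eq_zero K b (K + 2) (by omega), zero_mul, zero_add]
  rw [rho_pull1 K b (K + 2) (by omega) le_rfl, wordWt_bw1]
  rw [show K + 3 - (K + 2) = 1 from by omega]
  have hsh : ∏ i ∈ Ico 1 (K + 2), eF K (i - 1) b = ∏ i ∈ range (K + 1), eF K i b := by
    rw [Finset.prod_Ico_eq_prod_range, show K + 2 - 1 = K + 1 from by omega]
    refine Finset.prod_congr rfl fun q hq => ?_
    rw [show 1 + q - 1 = q from by omega]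
  rw [hsh, ← Finset.prod_range_succ]
  have hrho : rho K (K + 2) b
      = (if extVar b 0 = 1 then 1 else 0) * ∏ i ∈ Ico 1 (K + 2), eF K i b := by
    unfold rho
    rw [if_neg (by omega), show K + 3 - (K + 2) = 1 from by omega]
  unfold sig
  rw [hrho]
  rcases zmod2_cases (extVar b 0) with h | h
  · -- b0 = 0
    rw [Finset.range_eq_Ico, Finset.prod_eq_prod_Ico_succ_bot (show 0 < K + 2 from by omega)]
    have he0 : eF K 0 b = chi (extVar b 1) := by
      unfold eF
      rw [Finset.range_zero, Finset.prod_empty, one_mul, h, or2_zero]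
    have hrest : ∏ i ∈ Ico 1 (K + 2), eF K i b = 1 := by
      apply Finset.prod_eq_one
      intro i hi
      obtain ⟨hi1, _⟩ := Finset.mem_Ico.mp hi
      exact e_one K b i hi1 h
    rw [he0, hrest, mul_one, h, if_pos rfl, if_neg (by decide), one_mul, zero_mul, sub_zero]
  · -- b0 = 1
    rw [Finset.range_eq_Ico, Finset.prod_eq_prod_Ico_succ_bot (show 0 < K + 2 from by omega)]
    have he0 : eF K 0 b = -1 := by
      unfold eF
      rw [Finset.range_zero, Finset.prod_empty, one_mul, h, or2_one, chi_one]
    rw [he0, h, if_neg (by decide), if_pos rfl, zero_mul, one_mul, zero_sub]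
    ring

lemma rels (K : ℕ) (b : St K) : Rop K (sig K) b = rho K 0 b - rho K 1 b := by
  rw [Rop_apply]
  have h1 : sig K (pull K 0 b) = chi (extVar b 0) := by
    unfold sig
    have ha : extVar (pull K 0 b) 0 = 0 := by
      rw [extVar_pull K 0 b 0 (by omega)]
      rfl
    have hb : extVar (pull K 0 b) 1 = extVar b 0 := by
      rw [extVar_pull K 0 b 1 (by omega), if_neg (by omega)]
    rw [ha, hb, if_pos rfl, one_mul]
  have h2 : sig K (pull K 1 b) = 0 := by
    unfold sig
    have ha : extVar (pull K 1 b) 0 = 1 := by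
      rw [extVar_pull K 1 b 0 (by omega)]
      rfl
    rw [ha, if_neg (by decide), zero_mul]
  rw [h1, h2, wordWt_bw0, mul_one, zero_mul, add_zero]
  have h3 : rho K 1 b = (if extVar b 0 = 1 then 1 else 0) := by
    unfold rho
    rw [if_neg (by omega), show K + 3 - 1 = K + 2 from by omega, Finset.Ico_self,
      Finset.prod_empty, mul_one]
  have h4 : rho K 0 b = (if extVar b 0 = 0 then 1 else 0) := by
    unfold rho
    rw [if_pos rfl]
  rw [h3, h4]
  rcases zmod2_cases (extVar b 0) with h | h
  · rw [h, if_pos rfl, if_neg (by decide), chi_zero]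
    ring
  · rw [h, if_neg (by decide), if_pos rfl, chi_one]
    ring

/- ### iterate algebra -/

lemma RopIter_sub (K : ℕ) : ∀ (m : ℕ) (u v : St K → ℤ) (b : St K),
    (Rop K)^[m] (fun c => u c - v c) b = (Rop K)^[m] u b - (Rop K)^[m] v b := by
  intro m
  induction m with
  | zero => intro u v b; rfl
  | succ m ih =>
      intro u v b
      rw [Function.iterate_succ_apply, Function.iterate_succ_apply,
        Function.iterate_succ_apply]
      have h : Rop K (fun c => u c - v c) = fun c => Rop K u c - Rop K v c := by
        funext c
        unfold Rop
        rw [← Finset.sum_sub_distrib]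
        exact Finset.sum_congr rfl fun d _ => by ring
      rw [h]
      exact ih _ _ b

lemma RopIter_neg (K : ℕ) : ∀ (m : ℕ) (v : St K → ℤ) (b : St K),
    (Rop K)^[m] (fun c => -(v c)) b = -((Rop K)^[m] v b) := by
  intro m
  induction m with
  | zero => intro v b; rfl
  | succ m ih =>
      intro v b
      rw [Function.iterate_succ_apply, Function.iterate_succ_apply]
      have h : Rop K (fun c => -(v c)) = fun c => -(Rop K v c) := by
        funext c
        unfold Rop
        rw [← Finset.sum_neg_distrib]
        exact Finset.sum_congr rfl fun d _ => by ring
      rw [h]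
      exact ih _ b

/- ### the fundamental recurrence for the iterates -/

lemma claim1 (K : ℕ) : ∀ (t : ℕ), t ≤ K + 2 → ∀ (m : ℕ) (b : St K),
    (Rop K)^[m] (rho K t) b
      = (Rop K)^[m + t] (rho K 0) b - ∑ j ∈ range t, (Rop K)^[m + j] (rho K 0) b := by
  intro t
  induction t with
  | zero => intro _ m b; simp
  | succ t ih =>
      intro ht m b
      have hfun : rho K (t + 1) = fun c => Rop K (rho K t) c - rho K 0 c := by
        funext c
        rcases Nat.eq_zero_or_pos t with h0 | hpos
        · subst h0
          rw [rel0 K c]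
          ring
        · rw [relt K t hpos (by omega) c]
          ring
      rw [hfun, RopIter_sub]
      have h2 : (Rop K)^[m] (Rop K (rho K t)) b = (Rop K)^[m + 1] (rho K t) b := by
        rw [Function.iterate_succ_apply]
      rw [h2, ih (by omega) (m + 1) b]
      rw [Finset.sum_range_succ']
      have e1 : m + 1 + t = m + (t + 1) := by omega
      rw [e1]
      have e2 : ∑ j ∈ range t, (Rop K)^[m + 1 + j] (rho K 0) b
          = ∑ j ∈ range t, (Rop K)^[m + (j + 1)] (rho K 0) b :=
        Finset.sum_congr rfl fun j _ => by rw [show m + 1 + j = m + (j + 1) from by omega]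
      rw [e2, sub_sub]
      norm_num

lemma sigIter (K : ℕ) (m : ℕ) (b : St K) :
    (Rop K)^[m + 1] (sig K) b
      = 2 * (Rop K)^[m] (rho K 0) b - (Rop K)^[m + 1] (rho K 0) b := by
  rw [Function.iterate_succ_apply]
  have h : Rop K (sig K) = fun c => rho K 0 c - rho K 1 c := funext fun c => rels K c
  rw [h, RopIter_sub, claim1 K 1 (by omega) m b]
  rw [Finset.sum_range_one, Nat.add_zero]
  ring

lemma claim3 (K : ℕ) (m : ℕ) (b : St K) :
    (Rop K)^[m + (K + 4)] (rho K 0) b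
      = 2 * (∑ i ∈ Icc 2 (K + 2), (Rop K)^[m + i] (rho K 0) b)
          + 2 * (Rop K)^[m] (rho K 0) b := by
  have h1 : (Rop K)^[m + 2] (rho K (K + 2)) b
      = (Rop K)^[m + 1] (sig K) b - (Rop K)^[m + 1] (rho K (K + 2)) b := by
    have ha : (Rop K)^[m + 2] (rho K (K + 2)) b
        = (Rop K)^[m + 1] (Rop K (rho K (K + 2))) b := by
      rw [Function.iterate_succ_apply]
    rw [ha]
    have hfun : Rop K (rho K (K + 2)) = fun c => sig K c - rho K (K + 2) c :=
      funext fun c => relk K c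
    rw [hfun, RopIter_sub]
  rw [claim1 K (K + 2) le_rfl (m + 2) b, claim1 K (K + 2) le_rfl (m + 1) b,
    sigIter K m b] at h1
  have hs1 : ∑ j ∈ range (K + 2), (Rop K)^[m + 2 + j] (rho K 0) b
      = (∑ i ∈ Icc 2 (K + 2), (Rop K)^[m + i] (rho K 0) b)
          + (Rop K)^[m + (K + 3)] (rho K 0) b := by
    have ha : ∑ i ∈ Ico 2 (K + 4), (Rop K)^[m + i] (rho K 0) b
        = ∑ j ∈ range (K + 2), (Rop K)^[m + 2 + j] (rho K 0) b := by
      rw [Finset.sum_Ico_eq_sum_range, show K + 4 - 2 = K + 2 from by omega]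
      exact Finset.sum_congr rfl fun j _ => by
        rw [show m + (2 + j) = m + 2 + j from by omega]
    rw [← ha, Finset.sum_Ico_succ_top (show 2 ≤ K + 3 from by omega),
      ← Finset.Ico_add_one_right_eq_Icc]; rfl
  have hs2 : ∑ j ∈ range (K + 2), (Rop K)^[m + 1 + j] (rho K 0) b
      = (Rop K)^[m + 1] (rho K 0) b
          + ∑ i ∈ Icc 2 (K + 2), (Rop K)^[m + i] (rho K 0) b := by
    have ha : ∑ i ∈ Ico 1 (K + 3), (Rop K)^[m + i] (rho K 0) b
        = ∑ j ∈ range (K + 2), (Rop K)^[m + 1 + j] (rho K 0) b := by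
      rw [Finset.sum_Ico_eq_sum_range, show K + 3 - 1 = K + 2 from by omega]
      exact Finset.sum_congr rfl fun j _ => by
        rw [show m + (1 + j) = m + 1 + j from by omega]
    rw [← ha, Finset.sum_eq_sum_Ico_succ_bot (show 1 < K + 3 from by omega),
      ← Finset.Ico_add_one_right_eq_Icc]; rfl
  have e1 : m + 2 + (K + 2) = m + (K + 4) := by omega
  have e2 : m + 1 + (K + 2) = m + (K + 3) := by omega
  rw [e1, e2, hs1, hs2] at h1
  linarith [h1]

/- ### recurrence predicate and closure properties -/

def RecSeq (K : ℕ) (u : ℕ → ℤ) : Prop :=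
  ∀ m, u (m + (K + 4)) = 2 * (∑ i ∈ Icc 2 (K + 2), u (m + i)) + 2 * u m

lemma RecSeq_congr (K : ℕ) {u v : ℕ → ℤ} (h : ∀ m, u m = v m) (hv : RecSeq K v) :
    RecSeq K u := by
  intro m
  calc u (m + (K + 4)) = v (m + (K + 4)) := h _
    _ = 2 * (∑ i ∈ Icc 2 (K + 2), v (m + i)) + 2 * v m := hv m
    _ = 2 * (∑ i ∈ Icc 2 (K + 2), u (m + i)) + 2 * u m := by
        rw [Finset.sum_congr rfl fun i _ => (h (m + i)).symm, ← h m]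

lemma RecSeq_shift (K : ℕ) (c : ℕ) {u : ℕ → ℤ} (h : RecSeq K u) :
    RecSeq K (fun m => u (m + c)) := by
  intro m
  show u (m + (K + 4) + c) = 2 * (∑ i ∈ Icc 2 (K + 2), u (m + i + c)) + 2 * u (m + c)
  calc u (m + (K + 4) + c) = u ((m + c) + (K + 4)) := by
        rw [show m + (K + 4) + c = (m + c) + (K + 4) from by omega]
    _ = 2 * (∑ i ∈ Icc 2 (K + 2), u (m + c + i)) + 2 * u (m + c) := h (m + c)
    _ = 2 * (∑ i ∈ Icc 2 (K + 2), u (m + i + c)) + 2 * u (m + c) := by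
        rw [Finset.sum_congr rfl fun i _ => by
          rw [show m + c + i = m + i + c from by omega]]

lemma RecSeq_sub (K : ℕ) {u v : ℕ → ℤ} (hu : RecSeq K u) (hv : RecSeq K v) :
    RecSeq K (fun m => u m - v m) := by
  intro m
  show u (m + (K + 4)) - v (m + (K + 4))
      = 2 * (∑ i ∈ Icc 2 (K + 2), (u (m + i) - v (m + i))) + 2 * (u m - v m)
  rw [hu m, hv m, Finset.sum_sub_distrib]
  ring

lemma RecSeq_neg (K : ℕ) {u : ℕ → ℤ} (hu : RecSeq K u) :
    RecSeq K (fun m => -(u m)) := by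
  intro m
  show -(u (m + (K + 4))) = 2 * (∑ i ∈ Icc 2 (K + 2), -(u (m + i))) + 2 * (-(u m))
  rw [hu m, Finset.sum_neg_distrib]
  ring

lemma RecSeq_const_mul (K : ℕ) (c : ℤ) {u : ℕ → ℤ} (hu : RecSeq K u) :
    RecSeq K (fun m => c * u m) := by
  intro m
  show c * u (m + (K + 4)) = 2 * (∑ i ∈ Icc 2 (K + 2), c * u (m + i)) + 2 * (c * u m)
  rw [hu m, ← Finset.mul_sum]
  ring

lemma RecSeq_sum (K : ℕ) {ι : Type*} (s : Finset ι) (f : ι → ℕ → ℤ)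
    (h : ∀ j ∈ s, RecSeq K (f j)) :
    RecSeq K (fun m => ∑ j ∈ s, f j m) := by
  intro m
  show ∑ j ∈ s, f j (m + (K + 4))
      = 2 * (∑ i ∈ Icc 2 (K + 2), ∑ j ∈ s, f j (m + i)) + 2 * ∑ j ∈ s, f j m
  rw [Finset.sum_congr rfl (fun j hj => h j hj m)]
  rw [Finset.sum_add_distrib]
  congr 1
  · rw [← Finset.mul_sum, Finset.sum_comm]
  · rw [← Finset.mul_sum]

lemma recA (K : ℕ) (b : St K) :
    RecSeq K (fun j => (Rop K)^[j] (rho K 0) b) := fun m => claim3 K m b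

lemma recRho (K : ℕ) (t : ℕ) (ht : t ≤ K + 2) (b : St K) :
    RecSeq K (fun m => (Rop K)^[m] (rho K t) b) := by
  refine RecSeq_congr K (fun m => claim1 K t ht m b) ?_
  exact RecSeq_sub K (RecSeq_shift K t (recA K b))
    (RecSeq_sum K (range t) (fun j m => (Rop K)^[m + j] (rho K 0) b)
      (fun j _ => RecSeq_shift K j (recA K b)))

lemma recSig (K : ℕ) (b : St K) :
    RecSeq K (fun m => (Rop K)^[m + 1] (sig K) b) := by
  refine RecSeq_congr K (fun m => sigIter K m b) ?_
  exact RecSeq_sub K (RecSeq_const_mul K 2 (recA K b)) (RecSeq_shift K 1 (recA K b))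

lemma recRow (K : ℕ) (a : St K) :
    RecSeq K (fun m => (Rop K)^[m + 1] (Epath K (K + 2) a) a) := by
  rcases Eclass K a with h | ⟨t, ht1, ht2, h⟩ | h | h
  · rw [funext h]
    exact RecSeq_shift K 1 (recRho K 0 (by omega) a)
  · rw [funext h]
    exact RecSeq_shift K 1 (recRho K t ht2 a)
  · rw [funext h]
    exact recSig K a
  · rw [funext h]
    refine RecSeq_congr K (fun m => RopIter_neg K (m + 1) (rho K (K + 2)) a) ?_
    exact RecSeq_neg K (RecSeq_shift K 1 (recRho K (K + 2) le_rfl a))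

lemma recU (K : ℕ) :
    RecSeq K (fun m => ∑ a : St K, (Rop K)^[m + 1] (Epath K (K + 2) a) a) :=
  RecSeq_sum K Finset.univ _ (fun a _ => recRow K a)

lemma U_eq (K : ℕ) (m : ℕ) :
    (∑ a : St K, (Rop K)^[m + 1] (Epath K (K + 2) a) a)
      = boolExpSum (m + (K + 3)) (Gfun (K + 4) (m + (K + 3))) := by
  rw [← trace_eq K (m + (K + 3)) (by omega)]
  refine Finset.sum_congr rfl fun a _ => ?_
  calc (Rop K)^[m + 1] (Epath K (K + 2) a) a
      = Epath K ((K + 2) + (m + 1)) a a := by rw [Eit K (K + 2) a (m + 1)]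
    _ = Epath K (m + (K + 3)) a a := by
        rw [show (K + 2) + (m + 1) = m + (K + 3) from by omega]


/-- For every `k ≥ 4` the sequence
`{S(R_{2,…,k−2,k}(n) + R_{2,…,k−1}(n) + R_{2,…,k}(n))}` satisfies the homogeneous
linear recurrence with characteristic polynomial `X^k − 2(X^{k−2} + ⋯ + X² + 1)`,
i.e. `a(n) = 2(a(n−2) + ⋯ + a(n−(k−2))) + 2a(n−k)` for `n ≥ 2k`. -/
theorem rotation_triple_expSum_linear_recurrence (k : ℕ) (hk : 4 ≤ k) (n : ℕ) (hn : 2 * k ≤ n) :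
    boolExpSum n (Gfun k n) =
      2 * (∑ l ∈ Finset.Icc 2 (k - 2), boolExpSum (n - l) (Gfun k (n - l)))
        + 2 * boolExpSum (n - k) (Gfun k (n - k)) := by

  obtain ⟨K, rfl⟩ : ∃ K, k = K + 4 := ⟨k - 4, by omega⟩
  obtain ⟨M, rfl⟩ : ∃ M, n = M + (2 * K + 8) := ⟨n - (2 * K + 8), by omega⟩
  have hrec := recU K (M + 1)
  simp only [U_eq K] at hrec
  have e1 : M + 1 + (K + 4) + (K + 3) = M + (2 * K + 8) := by omega
  have e2 : M + 1 + (K + 3) = M + (2 * K + 8) - (K + 4) := by omega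
  have e3 : (K + 4) - 2 = K + 2 := by omega
  rw [e1, e2] at hrec
  rw [e3]
  have hsum : (∑ l ∈ Icc 2 (K + 2),
      boolExpSum (M + (2 * K + 8) - l) (Gfun (K + 4) (M + (2 * K + 8) - l)))
      = ∑ i ∈ Icc 2 (K + 2),
          boolExpSum (M + 1 + i + (K + 3)) (Gfun (K + 4) (M + 1 + i + (K + 3))) := by
    refine Finset.sum_nbij' (fun l => K + 4 - l) (fun i => K + 4 - i)
      (fun l hl => ?_) (fun i hi => ?_) (fun l hl => ?_) (fun i hi => ?_) (fun l hl => ?_)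
    · simp only [Finset.mem_Icc] at hl ⊢
      omega
    · simp only [Finset.mem_Icc] at hi ⊢
      omega
    · simp only [Finset.mem_Icc] at hl
      show K + 4 - (K + 4 - l) = l
      omega
    · simp only [Finset.mem_Icc] at hi
      show K + 4 - (K + 4 - i) = i
      omega
    · simp only [Finset.mem_Icc] at hl
      show boolExpSum (M + (2 * K + 8) - l) (Gfun (K + 4) (M + (2 * K + 8) - l))
          = boolExpSum (M + 1 + (K + 4 - l) + (K + 3))
              (Gfun (K + 4) (M + 1 + (K + 4 - l) + (K + 3)))
      rw [show M + (2 * K + 8) - l = M + 1 + (K + 4 - l) + (K + 3) from by omega]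
  rw [hsum]
  exact hrec
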